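/- For nonnegative reals M1 ≥ M2 ≥ M3, the maximum over all feasible allocations (M_Tℓ + M_Rℓ = Mℓ, all nonnegative) of min{M_R1+M_R2+M_R3, M_T2+M_T3+M_R2+M_R3, M_R3+M_T1+M_T2+2M_T3, 2(M_T1+M_T2+M_T3)} equals M2 + M3. -/

import Mathlib

/-!
The second cut, `MT2 + MT3 + MR2 + MR3`, counts every antenna of nodes 2 and 3, so it equals
`M2 + M3` whatever the split and bounds the minimum. The bound is attained by letting nodes 2 and 3
only receive and node 1 transmit with `M2` of its antennas: then every cut is at least `M2 + M3`.
-/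

/-- The combined cut-set bound (31). -/
def cutSetBound (MT1 MT2 MT3 MR1 MR2 MR3 : ℝ) : ℝ :=
  min (min (MR1 + MR2 + MR3) (MT2 + MT3 + MR2 + MR3))
    (min (MR3 + MT1 + MT2 + 2 * MT3) (2 * (MT1 + MT2 + MT3)))

theorem cutSetBound_le_antennas_two_three (MT1 MT2 MT3 MR1 MR2 MR3 : ℝ) :
    cutSetBound MT1 MT2 MT3 MR1 MR2 MR3 ≤ MT2 + MT3 + MR2 + MR3 :=
  (min_le_left _ _).trans (min_le_right _ _)

theorem cutSetBound_receive_only_two_three {M1 M2 M3 : ℝ} (h2 : M3 ≤ M2) (h3 : M2 ≤ M1) :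
    cutSetBound M2 0 0 (M1 - M2) M2 M3 = M2 + M3 := by
  apply le_antisymm
  · exact (cutSetBound_le_antennas_two_three _ _ _ _ _ _).trans_eq (by ring)
  · refine le_min (le_min ?_ ?_) (le_min ?_ ?_) <;> linarith

/-- Theorem 2 — optimal total DoF with unicast and broadcast messages. -/
theorem stmt_9 (M1 M2 M3 : ℝ) (h1 : 0 ≤ M3) (h2 : M3 ≤ M2) (h3 : M2 ≤ M1) :
    IsGreatest
      { d : ℝ | ∃ MT1 MT2 MT3 MR1 MR2 MR3 : ℝ,
          0 ≤ MT1 ∧ 0 ≤ MT2 ∧ 0 ≤ MT3 ∧ 0 ≤ MR1 ∧ 0 ≤ MR2 ∧ 0 ≤ MR3 ∧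
          MT1 + MR1 = M1 ∧ MT2 + MR2 = M2 ∧ MT3 + MR3 = M3 ∧
          d = min (min (MR1 + MR2 + MR3) (MT2 + MT3 + MR2 + MR3))
                (min (MR3 + MT1 + MT2 + 2 * MT3) (2 * (MT1 + MT2 + MT3))) }
      (M2 + M3) := by
  constructor
  · exact ⟨M2, 0, 0, M1 - M2, M2, M3, by linarith, le_rfl, le_rfl, sub_nonneg.2 h3,
      by linarith, h1, by ring, zero_add M2, zero_add M3,
      (cutSetBound_receive_only_two_three h2 h3).symm⟩
  · rintro d ⟨MT1, MT2, MT3, MR1, MR2, MR3, -, -, -, -, -, -, -, hM2, hM3, rfl⟩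
    calc cutSetBound MT1 MT2 MT3 MR1 MR2 MR3 ≤ MT2 + MT3 + MR2 + MR3 :=
          cutSetBound_le_antennas_two_three MT1 MT2 MT3 MR1 MR2 MR3
      _ = M2 + M3 := by rw [← hM2, ← hM3]; ring
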